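/- arXiv:1909.10808 — 3 statements merged into one kernel-verified Lean document; each statement's English description precedes it below -/
import Mathlib

section
/- The greatest common divisor of the values φ(an+b) over all natural numbers n, where φ is Euler's totient function and gcd(a,b)=1, divides 8. (In fact it divides 4, but 8 is a weaker acceptable form.) -/
lemma dirichlet' (M : ℕ) (hM : 0 < M) (c : ℕ) (hc : Nat.Coprime c M) (N : ℕ) :
    ∃ p, N < p ∧ p.Prime ∧ p % M = c % M := by
  haveI : NeZero M := ⟨hM.ne'⟩
  have hu : IsUnit ((c : ZMod M)) := (ZMod.isUnit_iff_coprime c M).mpr hc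
  obtain ⟨p, hpN, hp, hpc⟩ := Nat.forall_exists_prime_gt_and_eq_mod hu N
  exact ⟨p, hpN, hp, (ZMod.natCast_eq_natCast_iff' p c M).mp hpc⟩

lemma coprime_succ' (n : ℕ) : Nat.Coprime n (n + 1) := by
  have : Nat.gcd n (n+1) = Nat.gcd n 1 := by
    conv_lhs => rw [Nat.gcd_comm, Nat.gcd_rec]
    simp [Nat.add_mod_left]
  simpa [Nat.Coprime] using this

lemma modeq_coprime {x c M : ℕ} (h : x % M = c % M) (hc : Nat.Coprime c M) :
    Nat.Coprime x M :=
  (Nat.ModEq.gcd_eq (show x ≡ c [MOD M] from h)).trans hc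

lemma two_primes (M : ℕ) (hM : 0 < M) (x y : ℕ) (hx : Nat.Coprime x M)
    (hy : Nat.Coprime y M) (N : ℕ) :
    ∃ p q : ℕ, p.Prime ∧ q.Prime ∧ p ≠ q ∧ N < p ∧ N < q ∧
      p % M = x % M ∧ q % M = y % M := by
  haveI : NeZero M := ⟨hM.ne'⟩
  have hux : IsUnit ((x : ZMod M)) := (ZMod.isUnit_iff_coprime x M).mpr hx
  have huy : IsUnit ((y : ZMod M)) := (ZMod.isUnit_iff_coprime y M).mpr hy
  obtain ⟨p, hpN, hp, hpc⟩ := Nat.forall_exists_prime_gt_and_eq_mod hux N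
  obtain ⟨q, hqN, hq, hqc⟩ := Nat.forall_exists_prime_gt_and_eq_mod huy p
  exact ⟨p, q, hp, hq, by omega, hpN, by omega,
    (ZMod.natCast_eq_natCast_iff' p x M).mp hpc,
    (ZMod.natCast_eq_natCast_iff' q y M).mp hqc⟩

lemma not16 (x y : ℕ) (hx : x % 8 = 2 ∨ x % 8 = 6)
    (hy : y % 8 = 2 ∨ y % 8 = 4 ∨ y % 8 = 6) : ¬ 16 ∣ x * y := by
  obtain ⟨a, hxa, ha⟩ : ∃ a, x = 2 * a ∧ a % 2 = 1 := ⟨x / 2, by omega, by omega⟩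
  intro h
  have hy2 : ∃ e b, y = e * b ∧ b % 2 = 1 ∧ (e = 2 ∨ e = 4) := by
    rcases hy with h4 | h4 | h4
    · exact ⟨2, y / 2, by omega, by omega, Or.inl rfl⟩
    · exact ⟨4, y / 4, by omega, by omega, Or.inr rfl⟩
    · exact ⟨2, y / 2, by omega, by omega, Or.inl rfl⟩
  obtain ⟨e, b, hyb, hb, he⟩ := hy2
  have hab : (a * b) % 2 = 1 := Nat.odd_mul_odd ha hb
  obtain ⟨k, hk⟩ := h
  have hxy : x * y = e * 2 * (a * b) := by rw [hxa, hyb]; ring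
  set t := a * b
  rcases he with rfl | rfl <;> omega

lemma core (A : ℕ) (hA : 0 < A) (B : ℕ) (hcop : Nat.Coprime B A)
    (ℓ : ℕ) (hℓ : ℓ.Prime) (s : ℕ)
    (hsv : A.factorization ℓ ≤ s)
    (r r' : ℕ) (hr : Nat.Coprime r (ℓ ^ s)) (hr' : Nat.Coprime r' (ℓ ^ s))
    (hrr : r * r' ≡ B [MOD ℓ ^ (A.factorization ℓ)]) (N : ℕ) :
    ∃ p q, p.Prime ∧ q.Prime ∧ p ≠ q ∧ N < p ∧ N < q ∧
      (p * q) % A = B % A ∧ p % ℓ ^ s = r % ℓ ^ s ∧ q % ℓ ^ s = r' % ℓ ^ s := by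
  set v := A.factorization ℓ with hv
  set A₂ := A / ℓ ^ v with hA₂
  have hfact : ℓ ^ v * A₂ = A := Nat.ordProj_mul_ordCompl_eq_self A ℓ
  have hcoA₂ : Nat.Coprime ℓ A₂ := Nat.coprime_ordCompl hℓ hA.ne'
  have hco : Nat.Coprime (ℓ ^ s) A₂ := Nat.Coprime.pow_left _ hcoA₂
  have hcov : Nat.Coprime (ℓ ^ v) A₂ := Nat.Coprime.pow_left _ hcoA₂
  set M := ℓ ^ s * A₂ with hM
  have hA₂pos : 0 < A₂ := Nat.ordCompl_pos ℓ hA.ne'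
  have hMpos : 0 < M := Nat.mul_pos (Nat.pow_pos (n := s) hℓ.pos) hA₂pos
  have hAM : A ∣ M := by
    rw [← hfact, hM]
    exact Nat.mul_dvd_mul (pow_dvd_pow ℓ hsv) dvd_rfl
  have hBA₂ : Nat.Coprime B A₂ := hcop.coprime_dvd_right ⟨ℓ ^ v, by rw [← hfact]; ring⟩
  obtain ⟨x, hx1, hx2⟩ := Nat.chineseRemainder hco r B
  obtain ⟨y, hy1, hy2⟩ := Nat.chineseRemainder hco r' 1
  have hxM : Nat.Coprime x M :=
    Nat.Coprime.mul_right (modeq_coprime hx1 hr) (modeq_coprime hx2 hBA₂)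
  have hyM : Nat.Coprime y M :=
    Nat.Coprime.mul_right (modeq_coprime hy1 hr') (modeq_coprime hy2 (Nat.coprime_one_left _))
  obtain ⟨p, q, hp, hq, hpq, hpN, hqN, hpx, hqy⟩ := two_primes M hMpos x y hxM hyM N
  have hpModM : p ≡ x [MOD M] := hpx
  have hqModM : q ≡ y [MOD M] := hqy
  refine ⟨p, q, hp, hq, hpq, hpN, hqN, ?_, ?_, ?_⟩
  · -- p * q ≡ B [MOD A]
    have h1 : p * q ≡ x * y [MOD A] :=
      ((hpModM.mul hqModM).of_dvd hAM)
    have h2 : x * y ≡ B [MOD A] := by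
      rw [← hfact]
      rw [← Nat.modEq_and_modEq_iff_modEq_mul hcov]
      constructor
      · have hxv : x ≡ r [MOD ℓ ^ v] := hx1.of_dvd (pow_dvd_pow ℓ hsv)
        have hyv : y ≡ r' [MOD ℓ ^ v] := hy1.of_dvd (pow_dvd_pow ℓ hsv)
        exact (hxv.mul hyv).trans hrr
      · have := hx2.mul hy2
        simpa using this
    exact h1.trans h2
  · exact (hpModM.of_dvd ⟨A₂, rfl⟩).trans hx1
  · exact (hqModM.of_dvd ⟨A₂, rfl⟩).trans hy1


/-- The gcd of the values φ(a n + b) (over n ∈ ℕ with a n + b ≥ 1), where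
gcd(a,b) = 1, divides 8: equivalently, every common divisor of these values
divides 8. -/
theorem stmt_0 (a b : ℤ) (ha : 1 ≤ a) (hab : IsCoprime a b)
    (d : ℕ) (hd : ∀ n : ℕ, 1 ≤ a * n + b → d ∣ Nat.totient (a * n + b).toNat) :
    d ∣ 8 := by
  have ha0 : (0:ℤ) < a := by linarith
  set A := a.natAbs with hAdef
  have hAa : (A : ℤ) = a := Int.natAbs_of_nonneg (by linarith)
  have hA : 0 < A := by omega
  set B := (b % a).natAbs with hBdef
  have hBb : (B : ℤ) = b % a := Int.natAbs_of_nonneg (Int.emod_nonneg b (by omega))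
  have hcop : Nat.Coprime B A := by
    have h1 : IsCoprime a (b % a) := by
      rw [Int.emod_def, sub_eq_add_neg, ← neg_mul, neg_mul_comm]
      exact hab.add_mul_left_right _
    have h2 : Int.gcd (b % a) a = 1 := Int.isCoprime_iff_gcd_eq_one.mp h1.symm
    simpa [Int.gcd] using h2
  have key : ∀ m : ℕ, 0 < m → b ≤ (m : ℤ) → m % A = B % A → d ∣ m.totient := by
    intro m hm hbm hmod
    have h1 : (A : ℤ) ∣ (B : ℤ) - (m : ℤ) := (Nat.ModEq.dvd (show m ≡ B [MOD A] from hmod))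
    have h2 : a ∣ (m : ℤ) - b := by
      have h3 : a ∣ (m : ℤ) - B := by
        rw [hAa] at h1
        have := dvd_neg.mpr h1
        rwa [neg_sub] at this
      have h4 : a ∣ (B : ℤ) - b := by
        rw [hBb, Int.emod_def]
        exact ⟨-(b / a), by ring⟩
      have := dvd_add h3 h4
      simpa using this
    set k := ((m : ℤ) - b) / a with hk
    have hak : a * k = (m : ℤ) - b := Int.mul_ediv_cancel' h2
    have hk0 : 0 ≤ k := Int.ediv_nonneg (by linarith) (by linarith)
    have hmn : a * (k.toNat : ℤ) + b = (m : ℤ) := by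
      rw [Int.toNat_of_nonneg hk0, hak]; ring
    have := hd k.toNat (by rw [hmn]; exact_mod_cast hm)
    rwa [hmn, Int.toNat_natCast] at this
  have bound : ∀ m : ℕ, b.natAbs < m → b ≤ (m : ℤ) := by
    intro m hm
    calc b ≤ (b.natAbs : ℤ) := Int.le_natAbs
    _ ≤ (m : ℤ) := by exact_mod_cast hm.le
  have K1 : ∀ ℓ : ℕ, ℓ.Prime → ℓ ≠ 2 → ¬ ℓ ∣ d := by
    intro ℓ hℓ hℓ2 hdvd
    have hℓ3 : 3 ≤ ℓ := by have := hℓ.two_le; omega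
    have endgame : ∀ t : ℕ, 3 ≤ t → ℓ ∣ t → ¬ (1 ≡ t - 1 [MOD ℓ]) := by
      intro t ht3 hℓt h
      have h1 : ℓ ∣ (t - 1) - 1 := (Nat.modEq_iff_dvd' (by omega)).mp h
      have h2 : ℓ ∣ t - (t - 1 - 1) := Nat.dvd_sub hℓt h1
      rw [show t - (t - 1 - 1) = 2 by omega] at h2
      have := Nat.le_of_dvd (by norm_num) h2
      omega
    have hcons : ∀ t : ℕ, 1 ≤ t → Nat.Coprime (t - 1) t := by
      intro t ht
      have h := (coprime_succ' (t - 1)).symm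
      rw [Nat.sub_add_cancel ht] at h
      exact h.symm
    by_cases hv : ℓ ∣ A
    · have hvpos : 0 < A.factorization ℓ := hℓ.factorization_pos_of_dvd hA.ne' hv
      set v := A.factorization ℓ with hvdef
      set t := ℓ ^ v with htdef
      have htpos : 0 < t := Nat.pow_pos hℓ.pos
      have hℓt : ℓ ∣ t := dvd_pow_self ℓ hvpos.ne'
      have htA : t ∣ A := Nat.ordProj_dvd A ℓ
      have ht3 : 3 ≤ t := le_trans hℓ3 (Nat.le_of_dvd htpos hℓt)
      by_cases hB1 : B % ℓ = 1 % ℓ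
      · -- two primes case
        have hco_t : Nat.Coprime (t - 1) t := hcons t (by omega)
        have hr' : Nat.Coprime ((t - 1) * B) t :=
          Nat.Coprime.mul hco_t (hcop.coprime_dvd_right htA)
        have hsq : (t - 1) * ((t - 1) * B) ≡ B [MOD t] := by
          rw [Nat.modEq_iff_dvd]
          push_cast [Nat.cast_sub (show 1 ≤ t by omega)]
          refine ⟨B * (2 - (t:ℤ)), ?_⟩
          ring
        obtain ⟨p, q, hp, hq, hpq, hpN, hqN, hmod, hpr, hqr⟩ :=
          core A hA B hcop ℓ hℓ v le_rfl (t - 1) ((t - 1) * B) hco_t hr' hsq b.natAbs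
        have hdm : d ∣ (p * q).totient :=
          key (p * q) (Nat.mul_pos hp.pos hq.pos)
            (bound _ (lt_of_lt_of_le hpN (Nat.le_mul_of_pos_right p hq.pos))) hmod
        rw [Nat.totient_mul ((Nat.coprime_primes hp hq).mpr hpq),
          Nat.totient_prime hp, Nat.totient_prime hq] at hdm
        rcases hℓ.dvd_mul.mp (hdvd.trans hdm) with h1 | h1
        · have h2 : (1 : ℕ) ≡ p [MOD ℓ] := (Nat.modEq_iff_dvd' hp.one_lt.le).mpr h1
          have h3 : p ≡ t - 1 [MOD ℓ] := Nat.ModEq.of_dvd hℓt hpr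
          exact endgame t ht3 hℓt (h2.trans h3)
        · have h2 : (1 : ℕ) ≡ q [MOD ℓ] := (Nat.modEq_iff_dvd' hq.one_lt.le).mpr h1
          have h3 : q ≡ (t - 1) * B [MOD ℓ] := Nat.ModEq.of_dvd hℓt hqr
          have h4 : (t - 1) * B ≡ (t - 1) * 1 [MOD ℓ] := Nat.ModEq.mul_left _ hB1
          have h5 := (h2.trans h3).trans h4
          rw [mul_one] at h5
          exact endgame t ht3 hℓt h5
      · -- single prime case
        obtain ⟨p, hpN, hp, hpB⟩ := dirichlet' A hA B hcop b.natAbs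
        have hdp : d ∣ p.totient := key p hp.pos (bound p hpN) hpB
        rw [Nat.totient_prime hp] at hdp
        have h1 : ℓ ∣ p - 1 := hdvd.trans hdp
        have h2 : (1 : ℕ) ≡ p [MOD ℓ] := (Nat.modEq_iff_dvd' hp.one_lt.le).mpr h1
        have h3 : p ≡ B [MOD ℓ] := Nat.ModEq.of_dvd (hℓt.trans htA) hpB
        exact hB1 ((h2.trans h3).symm)
    · -- ℓ does not divide A
      have hv0 : A.factorization ℓ = 0 := Nat.factorization_eq_zero_of_not_dvd hv
      have hcoℓ : Nat.Coprime (ℓ - 1) (ℓ ^ 1) := by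
        rw [pow_one]; exact hcons ℓ (by omega)
      obtain ⟨p, q, hp, hq, hpq, hpN, hqN, hmod, hpr, hqr⟩ :=
        core A hA B hcop ℓ hℓ 1 (by omega) (ℓ - 1) (ℓ - 1) hcoℓ hcoℓ
          (by rw [hv0, pow_zero]; exact Nat.modEq_one) b.natAbs
      rw [pow_one] at hpr hqr
      have hdm : d ∣ (p * q).totient :=
        key (p * q) (Nat.mul_pos hp.pos hq.pos)
          (bound _ (lt_of_lt_of_le hpN (Nat.le_mul_of_pos_right p hq.pos))) hmod
      rw [Nat.totient_mul ((Nat.coprime_primes hp hq).mpr hpq),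
        Nat.totient_prime hp, Nat.totient_prime hq] at hdm
      rcases hℓ.dvd_mul.mp (hdvd.trans hdm) with h1 | h1
      · have h2 : (1 : ℕ) ≡ p [MOD ℓ] := (Nat.modEq_iff_dvd' hp.one_lt.le).mpr h1
        exact endgame ℓ hℓ3 dvd_rfl (h2.trans hpr)
      · have h2 : (1 : ℕ) ≡ q [MOD ℓ] := (Nat.modEq_iff_dvd' hq.one_lt.le).mpr h1
        exact endgame ℓ hℓ3 dvd_rfl (h2.trans hqr)
  have K2 : ¬ (16 ∣ d) := by
    intro hdvd
    by_cases hv : 2 ∣ A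
    · -- A even : two primes
      have hvpos : 0 < A.factorization 2 :=
        Nat.Prime.factorization_pos_of_dvd Nat.prime_two hA.ne' hv
      set v := A.factorization 2 with hvdef
      set s := max v 3 with hsdef
      set t := 2 ^ s with htdef
      have ht8 : (8:ℕ) ∣ t := by
        have h := pow_dvd_pow 2 (le_max_right v 3)
        simpa using h
      have htpos : 1 < t := by
        have := Nat.le_of_dvd (Nat.pow_pos (a := 2) (n := s) (by norm_num)) ht8
        omega
      have hBodd : B % 2 = 1 := by
        have h := hcop.coprime_dvd_right hv
        rcases Nat.mod_two_eq_zero_or_one B with h0 | h1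
        · exfalso
          have h2 : 2 ∣ Nat.gcd B 2 := Nat.dvd_gcd (by omega) dvd_rfl
          rw [h] at h2
          omega
        · exact h1
      obtain ⟨u, hu35, hcase⟩ : ∃ u : ℕ, (u = 3 ∨ u = 5) ∧
          ((u = 5 ∧ B % 8 = 3) ∨ (u = 3 ∧ ¬ B % 8 = 3)) := by
        by_cases h : B % 8 = 3
        · exact ⟨5, Or.inr rfl, Or.inl ⟨rfl, h⟩⟩
        · exact ⟨3, Or.inl rfl, Or.inr ⟨rfl, h⟩⟩
      have hu2 : Nat.Coprime u 2 := by rcases hu35 with rfl | rfl <;> decide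
      have hut : Nat.Coprime u t := Nat.Coprime.pow_right s hu2
      obtain ⟨u', hu'⟩ : ∃ u', u * u' % t = 1 :=
        by obtain ⟨m, -, hm⟩ := Nat.exists_mul_mod_eq_one_of_coprime hut htpos; exact ⟨m, hm⟩
      have huu' : u * u' ≡ 1 [MOD t] := by
        rw [Nat.ModEq, hu', Nat.mod_eq_of_lt htpos]
      have hu'B : Nat.Coprime (u' * B) t := by
        have h1 : Nat.Coprime (u * u') t := modeq_coprime huu' (Nat.coprime_one_left t)
        have h2 : Nat.Coprime u' t := Nat.Coprime.coprime_dvd_left (dvd_mul_left u' u) h1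
        have h3 : Nat.Coprime B t := Nat.Coprime.pow_right s (by
          rcases Nat.mod_two_eq_zero_or_one B with h0 | h1
          · omega
          · exact Nat.coprime_two_right.mpr (Nat.odd_iff.mpr h1))
        exact Nat.Coprime.mul h2 h3
      have hvt : (2:ℕ) ^ v ∣ t := pow_dvd_pow 2 (le_max_left v 3)
      have hrrt : u * (u' * B) ≡ B [MOD t] := by
        have h1 : u * u' * B ≡ 1 * B [MOD t] := Nat.ModEq.mul_right B huu'
        rwa [one_mul, mul_assoc] at h1
      have hrr : u * (u' * B) ≡ B [MOD 2 ^ v] := hrrt.of_dvd hvt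
      obtain ⟨p, q, hp, hq, hpq, hpN, hqN, hmod, hpr, hqr⟩ :=
        core A hA B hcop 2 Nat.prime_two s (le_max_left v 3) u (u' * B) hut hu'B hrr b.natAbs
      have hdm : d ∣ (p * q).totient :=
        key (p * q) (Nat.mul_pos hp.pos hq.pos)
          (bound _ (lt_of_lt_of_le hpN (Nat.le_mul_of_pos_right p hq.pos))) hmod
      rw [Nat.totient_mul ((Nat.coprime_primes hp hq).mpr hpq),
        Nat.totient_prime hp, Nat.totient_prime hq] at hdm
      have h16 : 16 ∣ (p - 1) * (q - 1) := hdvd.trans hdm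
      have hp8 : p % 8 = u % 8 := Nat.ModEq.of_dvd ht8 hpr
      have hq8 : q ≡ u' * B [MOD 8] := Nat.ModEq.of_dvd ht8 hqr
      have huq : (u * q) % 8 = B % 8 :=
        (Nat.ModEq.mul_left u hq8).trans (hrrt.of_dvd ht8)
      have hp2 := hp.two_le
      have hq2 := hq.two_le
      rcases hcase with ⟨rfl, hB3⟩ | ⟨rfl, hB3⟩
      · -- u = 5, B % 8 = 3
        have hq8' : q % 8 = 7 := by omega
        have hp8' : p % 8 = 5 := by omega
        exact not16 (q - 1) (p - 1) (Or.inr (by omega)) (Or.inr (Or.inl (by omega)))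
          (by rwa [mul_comm] at h16)
      · -- u = 3
        have hq8' : (q - 1) % 8 = 2 ∨ (q - 1) % 8 = 4 ∨ (q - 1) % 8 = 6 := by omega
        exact not16 (p - 1) (q - 1) (Or.inl (by omega)) hq8' h16
    · -- A odd : single prime p ≡ 3 mod 8
      have hco8 : Nat.Coprime 8 A := by
        have h2 : Nat.Coprime 2 A := Nat.coprime_two_left.mpr
          (Nat.odd_iff.mpr (by
            rcases Nat.mod_two_eq_zero_or_one A with h0 | h1
            · exact absurd (by omega : 2 ∣ A) hv
            · exact h1))
        have := Nat.Coprime.pow_left 3 h2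
        simpa using this
      obtain ⟨x, hx1, hx2⟩ := Nat.chineseRemainder hco8 3 B
      have hxM : Nat.Coprime x (8 * A) :=
        Nat.Coprime.mul_right (modeq_coprime hx1 (by decide)) (modeq_coprime hx2 hcop)
      obtain ⟨p, hpN, hp, hpx⟩ := dirichlet' (8 * A) (by omega) x hxM b.natAbs
      have hpA : p % A = B % A :=
        ((Nat.ModEq.of_dvd (dvd_mul_left A 8) (show p ≡ x [MOD 8*A] from hpx))).trans hx2
      have hdp : d ∣ p.totient := key p hp.pos (bound p hpN) hpA
      rw [Nat.totient_prime hp] at hdp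
      have h16 : 16 ∣ p - 1 := hdvd.trans hdp
      have hp8 : p % 8 = 3 :=
        ((Nat.ModEq.of_dvd (dvd_mul_right 8 A) (show p ≡ x [MOD 8*A] from hpx))).trans hx1
      have hp2 := hp.two_le
      omega
  -- wrap up
  have hd0 : d ≠ 0 := by
    have hpos : 0 < B + A * (b.natAbs + 1) := by positivity
    have hge : b ≤ ((B + A * (b.natAbs + 1) : ℕ) : ℤ) := by
      have h1 : b ≤ |b| := le_abs_self b
      have h2 : (1:ℤ) ≤ (A:ℤ) := by exact_mod_cast hA
      push_cast
      nlinarith [abs_nonneg b, (show (0:ℤ) ≤ (B:ℤ) by positivity)]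
    have hmod : (B + A * (b.natAbs + 1)) % A = B % A := Nat.add_mul_mod_self_left B A _
    have h := key _ hpos hge hmod
    intro h0
    rw [h0, zero_dvd_iff] at h
    exact (Nat.totient_pos.mpr hpos).ne' h
  rw [← Nat.factorization_le_iff_dvd hd0 (by norm_num)]
  rw [Finsupp.le_iff]
  intro pp hpp
  have hppp : pp.Prime := Nat.prime_of_mem_primeFactors (by rwa [← Nat.support_factorization])
  by_cases h2 : pp = 2
  · subst h2
    have h8 : (8:ℕ).factorization 2 = 3 := by
      rw [show (8:ℕ) = 2 ^ 3 from rfl, Nat.Prime.factorization_pow Nat.prime_two]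
      simp
    rw [h8]
    by_contra hlt
    have h4 : 2 ^ 4 ∣ d :=
      (Nat.Prime.pow_dvd_iff_le_factorization Nat.prime_two hd0).mpr (by omega)
    exact K2 (by norm_num at h4; exact h4)
  · exact absurd (Nat.dvd_of_mem_primeFactors (by rwa [← Nat.support_factorization])) (K1 pp hppp h2)
end

section
/- For every n ≥ 1, the integer 16 divides φ(16n² + 1), where φ is Euler's totient function. -/
/-!
Every prime factor `p` of `16 n² + 1 = (4n)² + 1` satisfies `p ≡ 1 [MOD 4]`. If two distinct
primes `p, q` divide `N = 16 n² + 1`, then `(p - 1)(q - 1) ∣ φ N` already gives `16 ∣ φ N`.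
Otherwise `N = p ^ k`, and `k` is odd because `(4n)² < N < (4n + 1)²` is not a square. Since
the units of `ZMod 16` have exponent `4`, `p ^ k ≡ 1` with `k` odd forces `p ≡ 1 [MOD 16]`,
and `16 ∣ p - 1 ∣ φ (p ^ k)`.
-/

open Nat

lemma Nat.Prime.mod_four_eq_one_of_dvd_sq_add_one {p a : ℕ} (hp : p.Prime) (hp2 : p ≠ 2)
    (h : p ∣ a ^ 2 + 1) : p % 4 = 1 := by
  have := Fact.mk hp
  have hsq : (a : ZMod p) ^ 2 = -1 := by
    rw [eq_neg_iff_add_eq_zero]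
    exact_mod_cast (ZMod.natCast_eq_zero_iff _ p).mpr h
  have h3 := ZMod.mod_four_ne_three_of_sq_eq_neg_one hsq
  have hodd := hp.eq_two_or_odd
  omega

lemma Nat.modEq_one_sixteen_of_pow_of_odd {p k : ℕ} (hp : Odd p) (hk : Odd k)
    (h : p ^ k ≡ 1 [MOD 16]) : p ≡ 1 [MOD 16] := by
  rw [← ZMod.natCast_eq_natCast_iff] at h ⊢
  push_cast at h ⊢
  obtain ⟨m, rfl⟩ := hp
  have h4 : ((2 * m + 1 : ℕ) : ZMod 16) ^ 4 = 1 := by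
    push_cast
    generalize (m : ZMod 16) = x
    revert x
    decide
  exact (pow_eq_one_iff_of_coprime (Nat.Coprime.pow_left 2 (coprime_two_left.mpr hk))).mp ⟨h4, h⟩

lemma sub_one_mul_sub_one_dvd_totient {p q N : ℕ} (hp : p.Prime) (hq : q.Prime) (hpq : p ≠ q)
    (hpN : p ∣ N) (hqN : q ∣ N) : (p - 1) * (q - 1) ∣ φ N := by
  have hcop : p.Coprime q := (coprime_primes hp hq).mpr hpq
  rw [← totient_prime hp, ← totient_prime hq, ← totient_mul hcop]
  exact totient_dvd_of_dvd (hcop.mul_dvd_of_dvd_of_dvd hpN hqN)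

theorem sixteen_dvd_totient_of_not_isSquare {N : ℕ} (hN : N ≡ 1 [MOD 16]) (hsq : ¬IsSquare N)
    (hmod : ∀ p, p.Prime → p ∣ N → p % 4 = 1) : 16 ∣ φ N := by
  have h4 : ∀ p, p.Prime → p ∣ N → 4 ∣ p - 1 := fun p hp hpN ↦ by
    have := hmod p hp hpN
    omega
  by_cases hpow : IsPrimePow N
  · obtain ⟨p, k, hp, hk, rfl⟩ := (isPrimePow_nat_iff N).mp hpow
    have hpN : p ∣ p ^ k := dvd_pow_self p hk.ne'
    have hp_odd : Odd p := odd_iff.mpr (by have := hmod p hp hpN; omega)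
    have hk_odd : Odd k := not_even_iff_odd.mp fun he ↦ hsq (he.isSquare_pow p)
    have h16 : 16 ∣ p - 1 :=
      (modEq_iff_dvd' hp.one_le).mp (modEq_one_sixteen_of_pow_of_odd hp_odd hk_odd hN).symm
    rw [totient_prime_pow hp hk]
    exact h16.mul_left _
  · have hN2 : 2 ≤ N := by
      rcases N with _ | _ | N
      · exact absurd IsSquare.zero hsq
      · exact absurd IsSquare.one hsq
      · omega
    obtain ⟨p, hp, q, hq, hpq⟩ := (not_isPrimePow_iff_nontrivial_of_two_le hN2).mp hpow
    simp only [Finset.mem_coe, mem_primeFactors] at hp hq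
    exact (mul_dvd_mul (h4 p hp.1 hp.2.1) (h4 q hq.1 hq.2.1)).trans
      (sub_one_mul_sub_one_dvd_totient hp.1 hq.1 hpq hp.2.1 hq.2.1)

/-- For every n ≥ 1, 16 divides φ(16 n² + 1). -/
theorem stmt_1 (n : ℕ) (hn : 1 ≤ n) : 16 ∣ Nat.totient (16 * n ^ 2 + 1) := by
  have hN : 16 * n ^ 2 + 1 = (4 * n) ^ 2 + 1 := by ring
  refine sixteen_dvd_totient_of_not_isSquare ?_ ?_ fun p hp hpN ↦ ?_
  · simp [Nat.ModEq, Nat.add_mod]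
  · rintro ⟨t, ht⟩
    refine not_exists_sq' (m := 4 * n) (n := 16 * n ^ 2 + 1) ?_ ?_ ⟨t, by rw [ht, sq]⟩ <;>
      nlinarith
  · refine hp.mod_four_eq_one_of_dvd_sq_add_one ?_ (hN ▸ hpN)
    rintro rfl
    omega
end

section
/- For each prime p ≤ k with p^α exactly dividing d = gcd{f(n) : n ∈ ℤ} (f ∈ ℤ[x] of degree k), there exists a residue class a_p modulo p^{α+1} such that p^α exactly divides f(n) for all n ≡ a_p (mod p^{α+1}). -/
/-! Since `n - a ∣ f(n) - f(a)`, the residue of `f(n)` modulo `p^(α+1)` depends only on `n`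
modulo `p^(α+1)`. As `p^(α+1) ∤ d`, some value `f(a)` is not divisible by `p^(α+1)`, and then
neither is any `f(n)` with `n ≡ a`; every value is divisible by `p^α ∣ d`. -/

open Polynomial

theorem Int.ModEq.eval_polynomial (f : ℤ[X]) {m a b : ℤ} (h : a ≡ b [ZMOD m]) :
    f.eval a ≡ f.eval b [ZMOD m] :=
  Int.modEq_iff_dvd.mpr ((Int.modEq_iff_dvd.mp h).trans (sub_dvd_eval_sub b a f))

theorem stmt_19_general (f : Polynomial ℤ) (d : ℕ)
    (hd : ∀ m : ℕ, m ∣ d ↔ ∀ n : ℤ, (m : ℤ) ∣ f.eval n)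
    (p : ℕ) (α : ℕ)
    (hα : p ^ α ∣ d) (hα' : ¬ p ^ (α + 1) ∣ d) :
    ∃ a : ℤ, ∀ n : ℤ, n ≡ a [ZMOD (p : ℤ) ^ (α + 1)] →
      (p : ℤ) ^ α ∣ f.eval n ∧ ¬ (p : ℤ) ^ (α + 1) ∣ f.eval n := by
  obtain ⟨a, ha⟩ : ∃ a : ℤ, ¬ (p : ℤ) ^ (α + 1) ∣ f.eval a := by
    simpa [hd] using hα'
  refine ⟨a, fun n hn => ⟨?_, ?_⟩⟩
  · exact_mod_cast (hd (p ^ α)).mp hα n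
  · rwa [(hn.eval_polynomial f).dvd_iff]

/-- Let f ∈ ℤ[x] of degree k, let d be the gcd of all values f(n), n ∈ ℤ, and
let p ≤ k be a prime with p^α ‖ d.  Then there is a residue class a_p mod
p^(α+1) on which p^α exactly divides f(n). -/
theorem stmt_19 (f : Polynomial ℤ) (k : ℕ) (hk : f.natDegree = k) (d : ℕ)
    (hd : ∀ m : ℕ, m ∣ d ↔ ∀ n : ℤ, (m : ℤ) ∣ f.eval n)
    (p : ℕ) (hp : p.Prime) (hpk : p ≤ k) (α : ℕ)
    (hα : p ^ α ∣ d) (hα' : ¬ p ^ (α + 1) ∣ d) :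
    ∃ a : ℤ, ∀ n : ℤ, n ≡ a [ZMOD (p : ℤ) ^ (α + 1)] →
      (p : ℤ) ^ α ∣ f.eval n ∧ ¬ (p : ℤ) ^ (α + 1) ∣ f.eval n :=
  stmt_19_general f d hd p α hα hα'
end
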